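/- For every integer n ≥ 2 and every κ ∈ ℝ, the model isoperimetric profile I_κ, extended by I_κ(0) = 0, is concave on the closure of the range of V_κ. In particular, I_κ(δ·v) ≥ δ·I_κ(v) for every v in the range of V_κ and every δ ∈ [0,1]. -/

import Mathlib

open Real MeasureTheory Filter Asymptotics

/-- Inverse hyperbolic tangent. -/
noncomputable def artanh (y : ℝ) : ℝ := Real.log ((1 + y) / (1 - y)) / 2

/-- The generalized sine function `sin_κ`. -/
noncomputable def sinK (κ t : ℝ) : ℝ :=
  if 0 < κ then Real.sin (Real.sqrt κ * t) / Real.sqrt κ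
  else if κ < 0 then Real.sinh (Real.sqrt (-κ) * t) / Real.sqrt (-κ)
  else t

/-- The generalized cosine function `cos_κ = sin_κ'`. -/
noncomputable def cosK (κ t : ℝ) : ℝ :=
  if 0 < κ then Real.cos (Real.sqrt κ * t)
  else if κ < 0 then Real.cosh (Real.sqrt (-κ) * t)
  else 1

/-- The generalized tangent function `tan_κ`. -/
noncomputable def tanK (κ t : ℝ) : ℝ := sinK κ t / cosK κ t

/-- The inverse function `arctan_κ` of `tan_κ`. -/
noncomputable def arctanK (κ x : ℝ) : ℝ :=
  if 0 < κ then Real.arctan (Real.sqrt κ * x) / Real.sqrt κ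
  else if κ < 0 then _root_.artanh (Real.sqrt (-κ) * x) / Real.sqrt (-κ)
  else x

/-- `ω_{n-1}`, the (n-1)-volume of the unit sphere of ℝⁿ, i.e. `n` times the
volume of the unit ball. -/
noncomputable def omegaS (n : ℕ) : ℝ :=
  n * (volume (Metric.ball (0 : EuclideanSpace ℝ (Fin n)) 1)).toReal

/-- `A_κ(t)`: the volume of a geodesic sphere of radius `t` in the model space. -/
noncomputable def AK (n : ℕ) (κ t : ℝ) : ℝ := omegaS n * sinK κ t ^ (n - 1)

/-- `V_κ(t)`: the volume of a geodesic ball of radius `t` in the model space. -/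
noncomputable def VK (n : ℕ) (κ t : ℝ) : ℝ := omegaS n * ∫ s in (0:ℝ)..t, sinK κ s ^ (n - 1)

/-- The natural domain of `V_κ`: `[0, π/√κ)` when `κ > 0` and `[0, ∞)` otherwise. -/
noncomputable def domK (κ : ℝ) : Set ℝ :=
  if 0 < κ then Set.Ico 0 (Real.pi / Real.sqrt κ) else Set.Ici 0

/-- The range of `V_κ` (on its natural domain). -/
noncomputable def rangeVK (n : ℕ) (κ : ℝ) : Set ℝ := VK n κ '' domK κ

/-- The inverse of `V_κ` on its natural domain. -/
noncomputable def VKinv (n : ℕ) (κ v : ℝ) : ℝ := sInf {t : ℝ | t ∈ domK κ ∧ VK n κ t = v}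

/-- The isoperimetric profile `I_κ = A_κ ∘ V_κ⁻¹` of the model space. -/
noncomputable def IK (n : ℕ) (κ v : ℝ) : ℝ := AK n κ (VKinv n κ v)

/-!
Parametrize volumes by radii: `v = V_κ(t)` and `I_κ(v) = A_κ(t)`, where `V_κ' = A_κ > 0` on
the open interval of radii. Formally `dI_κ/dv = A_κ'/A_κ = (n - 1) cos_κ/sin_κ`, and
`cos_κ/sin_κ` decreases in `t` since `sin_κ d cos_κ c - cos_κ d sin_κ c = sin_κ (d - c) > 0`
for `c < d`. Cauchy's mean value theorem turns this into decreasing chord slopes of `I_κ`, so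
`V_κ⁻¹` never has to be differentiated. For `κ > 0` the endpoint `V_κ(π/√κ)` of the closure of
the range is covered because `A_κ(π/√κ) = 0`; for `κ ≤ 0` the range `[0, ∞)` is already closed.
-/

open Set

section MeanValue

variable {f g g' r : ℝ → ℝ}

theorem exists_mem_Ioo_sub_eq_mul_sub {a b : ℝ} (hab : a < b) (hfc : ContinuousOn f (Icc a b))
    (hgc : ContinuousOn g (Icc a b)) (hf : ∀ x ∈ Ioo a b, HasDerivAt f (r x * g' x) x)
    (hg : ∀ x ∈ Ioo a b, HasDerivAt g (g' x) x) (hg' : ∀ x ∈ Ioo a b, g' x ≠ 0) :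
    ∃ c ∈ Ioo a b, f b - f a = r c * (g b - g a) := by
  obtain ⟨c, hc, hcauchy⟩ :=
    exists_ratio_hasDerivAt_eq_ratio_slope f (fun x => r x * g' x) hab hfc hf g g' hgc hg
  exact ⟨c, hc, mul_right_cancel₀ (hg' c hc) (by linear_combination -hcauchy)⟩

theorem concaveOn_image_of_hasDerivAt_eq_mul {F : ℝ → ℝ} {s : Set ℝ} (hs : Convex ℝ s)
    (hfc : ContinuousOn f s) (hgc : ContinuousOn g s)
    (hf : ∀ x ∈ interior s, HasDerivAt f (r x * g' x) x)
    (hg : ∀ x ∈ interior s, HasDerivAt g (g' x) x) (hg'_pos : ∀ x ∈ interior s, 0 < g' x)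
    (hr : AntitoneOn r (interior s)) (hF : ∀ t ∈ s, F (g t) = f t) :
    ConcaveOn ℝ (g '' s) F := by
  have hmono : StrictMonoOn g s := strictMonoOn_of_hasDerivWithinAt_pos hs hgc
    (fun x hx => (hg x hx).hasDerivWithinAt) hg'_pos
  have hIcc : ∀ {a b}, a ∈ s → b ∈ s → Icc a b ⊆ s := fun ha hb => hs.ordConnected.out ha hb
  have hIoo : ∀ {a b}, a ∈ s → b ∈ s → Ioo a b ⊆ interior s := fun ha hb =>
    interior_maximal (Ioo_subset_Icc_self.trans (hIcc ha hb)) isOpen_Ioo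
  have hslope : ∀ {a b}, a ∈ s → b ∈ s → a < b →
      ∃ c ∈ Ioo a b, F (g b) - F (g a) = r c * (g b - g a) := fun ha hb hab => by
    rw [hF _ ha, hF _ hb]
    exact exists_mem_Ioo_sub_eq_mul_sub hab (hfc.mono (hIcc ha hb)) (hgc.mono (hIcc ha hb))
      (fun x hx => hf x (hIoo ha hb hx)) (fun x hx => hg x (hIoo ha hb hx))
      (fun x hx => (hg'_pos x (hIoo ha hb hx)).ne')
  have hconv : Convex ℝ (g '' s) := (hs.isPreconnected.image g hgc).ordConnected.convex
  refine concaveOn_of_slope_anti_adjacent hconv ?_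
  rintro _ y _ ⟨a, ha, rfl⟩ ⟨c, hc, rfl⟩ hay hyc
  obtain ⟨b, hb, rfl⟩ : y ∈ g '' s :=
    hconv.ordConnected.out ⟨a, ha, rfl⟩ ⟨c, hc, rfl⟩ ⟨hay.le, hyc.le⟩
  have hab := (hmono.lt_iff_lt ha hb).1 hay
  have hbc := (hmono.lt_iff_lt hb hc).1 hyc
  obtain ⟨p, hp, hp_eq⟩ := hslope ha hb hab
  obtain ⟨q, hq, hq_eq⟩ := hslope hb hc hbc
  rw [hp_eq, hq_eq, mul_div_cancel_right₀ _ (sub_pos.2 hay).ne',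
    mul_div_cancel_right₀ _ (sub_pos.2 hyc).ne']
  exact hr (hIoo ha hb hp) (hIoo hb hc hq) (hp.2.trans hq.1).le

end MeanValue

section ModelSpace

variable {n : ℕ} {κ t : ℝ}

theorem omegaS_pos (hn : 1 ≤ n) : 0 < omegaS n :=
  mul_pos (by exact_mod_cast hn)
    (ENNReal.toReal_pos (Metric.measure_ball_pos _ _ one_pos).ne' measure_ball_lt_top.ne)

theorem sinK_zero : sinK κ 0 = 0 := by
  unfold sinK; split_ifs <;> simp

theorem sinK_pi_div_sqrt (hκ : 0 < κ) : sinK κ (π / √κ) = 0 := by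
  rw [sinK, if_pos hκ, mul_div_cancel₀ _ (Real.sqrt_pos.2 hκ).ne', Real.sin_pi, zero_div]

theorem sinK_sub (c d : ℝ) : sinK κ (d - c) = sinK κ d * cosK κ c - cosK κ d * sinK κ c := by
  rcases lt_trichotomy κ 0 with h | rfl | h
  · have hs : √(-κ) ≠ 0 := (Real.sqrt_pos.2 (neg_pos.2 h)).ne'
    simp only [sinK, cosK, if_neg h.not_gt, if_pos h, mul_sub, Real.sinh_sub]
    field_simp
  · simp [sinK, cosK]
  · have hs : √κ ≠ 0 := (Real.sqrt_pos.2 h).ne'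
    simp only [sinK, cosK, if_pos h, mul_sub, Real.sin_sub]
    field_simp

theorem sinK_pos (h0 : 0 < t) (hT : 0 < κ → t < π / √κ) : 0 < sinK κ t := by
  unfold sinK
  split_ifs with h₁ h₂
  · have hs : 0 < √κ := Real.sqrt_pos.2 h₁
    refine div_pos (Real.sin_pos_of_pos_of_lt_pi (by positivity) ?_) hs
    simpa [mul_comm, lt_div_iff₀ hs] using hT h₁
  · have hs : 0 < √(-κ) := Real.sqrt_pos.2 (neg_pos.2 h₂)
    exact div_pos (Real.sinh_pos_iff.2 (mul_pos hs h0)) hs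
  · exact h0

theorem self_le_sinK (hκ : ¬0 < κ) (ht : 0 ≤ t) : t ≤ sinK κ t := by
  rw [sinK, if_neg hκ]
  split_ifs with h
  · have hs : 0 < √(-κ) := Real.sqrt_pos.2 (neg_pos.2 h)
    rw [le_div_iff₀ hs, mul_comm]
    exact Real.self_le_sinh_iff.2 (by positivity)
  · exact le_rfl

theorem continuous_sinK : Continuous (sinK κ) := by
  unfold sinK
  split_ifs <;> fun_prop

theorem hasDerivAt_sinK (t : ℝ) : HasDerivAt (sinK κ) (cosK κ t) t := by
  rcases lt_trichotomy κ 0 with h | rfl | h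
  · have hs : √(-κ) ≠ 0 := (Real.sqrt_pos.2 (neg_pos.2 h)).ne'
    have := (((hasDerivAt_id' t).const_mul √(-κ)).sinh).div_const √(-κ)
    show HasDerivAt (fun x => sinK κ x) _ _
    simp only [sinK, cosK, if_neg h.not_gt, if_pos h]
    exact this.congr_deriv (by field_simp)
  · show HasDerivAt (fun x => sinK 0 x) _ _
    simpa [sinK, cosK] using hasDerivAt_id' t
  · have hs : √κ ≠ 0 := (Real.sqrt_pos.2 h).ne'
    have := (((hasDerivAt_id' t).const_mul √κ).sin).div_const √κ
    show HasDerivAt (fun x => sinK κ x) _ _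
    simp only [sinK, cosK, if_pos h]
    exact this.congr_deriv (by field_simp)

theorem continuous_AK : Continuous (AK n κ) :=
  continuous_const.mul (continuous_sinK.pow _)

theorem AK_eq_zero_of_sinK_eq_zero (hn : 2 ≤ n) (h : sinK κ t = 0) : AK n κ t = 0 := by
  rw [AK, h, zero_pow (by omega), mul_zero]

theorem hasDerivAt_AK (hs : sinK κ t ≠ 0) :
    HasDerivAt (AK n κ) (((n - 1 : ℕ) : ℝ) * (cosK κ t / sinK κ t) * AK n κ t) t := by
  refine (((hasDerivAt_sinK t).pow (n - 1)).const_mul (omegaS n)).congr_deriv ?_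
  rw [AK]
  cases n - 1 with
  | zero => simp
  | succ m => rw [Nat.add_sub_cancel, pow_succ]; field_simp

theorem hasDerivAt_VK (t : ℝ) : HasDerivAt (VK n κ) (AK n κ t) t :=
  (((continuous_sinK.pow _).integral_hasStrictDerivAt 0 t).hasDerivAt).const_mul (omegaS n)

theorem continuous_VK : Continuous (VK n κ) :=
  continuous_iff_continuousAt.2 fun t => (hasDerivAt_VK t).continuousAt

theorem VK_zero : VK n κ 0 = 0 := by simp [VK]

theorem omegaS_mul_pow_div_le_VK (hn : 1 ≤ n) (hκ : ¬0 < κ) (ht : 0 ≤ t) :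
    omegaS n * (t ^ n / n) ≤ VK n κ t := by
  have hpow : ∫ s in (0 : ℝ)..t, s ^ (n - 1) = t ^ n / n := by
    rw [integral_pow, Nat.sub_add_cancel hn, zero_pow (by omega), sub_zero, Nat.cast_sub hn]
    simp
  rw [VK, ← hpow]
  refine mul_le_mul_of_nonneg_left (intervalIntegral.integral_mono_on ht
    (intervalIntegral.intervalIntegrable_pow _) ((continuous_sinK.pow _).intervalIntegrable _ _)
    fun s hs => pow_le_pow_left₀ hs.1 (self_le_sinK hκ hs.1) _) (omegaS_pos hn).le

theorem tendsto_VK_atTop (hn : 1 ≤ n) (hκ : ¬0 < κ) : Tendsto (VK n κ) atTop atTop := by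
  refine tendsto_atTop_mono' _ ((eventually_ge_atTop 0).mono fun t ht =>
    omegaS_mul_pow_div_le_VK hn hκ ht) ?_
  exact ((tendsto_pow_atTop (by omega)).atTop_div_const (by positivity)).const_mul_atTop
    (omegaS_pos hn)

theorem zero_mem_domK : (0 : ℝ) ∈ domK κ := by
  unfold domK; split_ifs with h
  exacts [⟨le_rfl, div_pos Real.pi_pos (Real.sqrt_pos.2 h)⟩, self_mem_Ici]

theorem convex_domK : Convex ℝ (domK κ) := by
  unfold domK; split_ifs
  exacts [convex_Ico _ _, convex_Ici _]

theorem closure_domK : closure (domK κ) = if 0 < κ then Icc 0 (π / √κ) else Ici 0 := by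
  unfold domK; split_ifs with h
  exacts [closure_Ico (div_pos Real.pi_pos (Real.sqrt_pos.2 h)).ne, closure_Ici 0]

theorem mem_interior_closure_domK (ht : t ∈ interior (closure (domK κ))) :
    0 < t ∧ (0 < κ → t < π / √κ) := by
  rw [closure_domK] at ht
  split_ifs at ht with h
  · rw [interior_Icc] at ht; exact ⟨ht.1, fun _ => ht.2⟩
  · rw [interior_Ici] at ht; exact ⟨ht, fun h' => absurd h' h⟩

theorem sinK_eq_zero_of_mem_closure_domK_diff (ht : t ∈ closure (domK κ) \ domK κ) :
    sinK κ t = 0 := by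
  obtain ⟨htc, htD⟩ := ht
  rw [closure_domK] at htc
  unfold domK at htD
  split_ifs at htc htD with h
  · obtain rfl : t = π / √κ := htc.2.eq_or_lt.resolve_right fun hlt => htD ⟨htc.1, hlt⟩
    exact sinK_pi_div_sqrt h
  · exact absurd htc htD

theorem sinK_pos_of_mem_interior_closure_domK (ht : t ∈ interior (closure (domK κ))) :
    0 < sinK κ t :=
  sinK_pos (mem_interior_closure_domK ht).1 (mem_interior_closure_domK ht).2

theorem AK_pos (hn : 1 ≤ n) (ht : t ∈ interior (closure (domK κ))) : 0 < AK n κ t :=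
  mul_pos (omegaS_pos hn) (pow_pos (sinK_pos_of_mem_interior_closure_domK ht) _)

theorem antitoneOn_cosK_div_sinK :
    AntitoneOn (fun t => cosK κ t / sinK κ t) (interior (closure (domK κ))) := by
  intro c hc d hd hcd
  obtain rfl | hlt := hcd.eq_or_lt
  · rfl
  obtain ⟨hc0, hcT⟩ := mem_interior_closure_domK hc
  obtain ⟨hd0, hdT⟩ := mem_interior_closure_domK hd
  have hsub : 0 < sinK κ (d - c) :=
    sinK_pos (sub_pos.2 hlt) fun hκ => (sub_lt_self d hc0).trans (hdT hκ)
  rw [sinK_sub] at hsub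
  rw [div_le_div_iff₀ (sinK_pos hd0 hdT) (sinK_pos hc0 hcT)]
  linarith

theorem strictMonoOn_VK (hn : 1 ≤ n) : StrictMonoOn (VK n κ) (closure (domK κ)) :=
  strictMonoOn_of_hasDerivWithinAt_pos convex_domK.closure continuous_VK.continuousOn
    (fun t _ => (hasDerivAt_VK t).hasDerivWithinAt) fun _ ht => AK_pos hn ht

theorem IK_VK (hn : 2 ≤ n) (ht : t ∈ closure (domK κ)) : IK n κ (VK n κ t) = AK n κ t := by
  have hfiber : {s | s ∈ domK κ ∧ VK n κ s = VK n κ t} ⊆ {t} := fun s hs =>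
    (strictMonoOn_VK (by omega)).injOn (subset_closure hs.1) ht hs.2
  by_cases htD : t ∈ domK κ
  · rw [IK, VKinv, hfiber.antisymm (singleton_subset_iff.2 ⟨htD, rfl⟩), csInf_singleton]
  · -- Here `t = π/√κ` with `κ > 0`, and `VKinv` falls back to `sInf ∅ = 0`;
    -- this is harmless because `A_κ` vanishes at both `0` and `π/√κ`.
    have hempty : {s | s ∈ domK κ ∧ VK n κ s = VK n κ t} = ∅ :=
      eq_empty_of_forall_notMem fun s hs => htD (hfiber hs ▸ hs.1)
    rw [IK, VKinv, hempty, Real.sInf_empty, AK_eq_zero_of_sinK_eq_zero hn sinK_zero,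
      AK_eq_zero_of_sinK_eq_zero hn (sinK_eq_zero_of_mem_closure_domK_diff ⟨ht, htD⟩)]

theorem isClosed_image_closure_domK (hn : 1 ≤ n) : IsClosed (VK n κ '' closure (domK κ)) := by
  have hmono := (strictMonoOn_VK (κ := κ) hn).monotoneOn
  rw [closure_domK] at hmono ⊢
  split_ifs at hmono ⊢ with h
  · exact (isCompact_Icc.image continuous_VK).isClosed
  · have himage : VK n κ '' Ici 0 = Ici 0 := by
      refine (image_subset_iff.2 fun t ht => ?_).antisymm ?_
      · exact VK_zero (n := n) (κ := κ) ▸ hmono self_mem_Ici ht ht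
      · simpa only [VK_zero] using
          intermediate_value_Ici (a := 0) continuous_VK.continuousOn (tendsto_VK_atTop hn h)
    rw [himage]
    exact isClosed_Ici

theorem closure_rangeVK (hn : 1 ≤ n) : closure (rangeVK n κ) = VK n κ '' closure (domK κ) :=
  (closure_minimal (image_mono subset_closure) (isClosed_image_closure_domK hn)).antisymm
    (image_closure_subset_closure_image continuous_VK)

theorem concaveOn_IK (hn : 2 ≤ n) : ConcaveOn ℝ (VK n κ '' closure (domK κ)) (IK n κ) :=
  concaveOn_image_of_hasDerivAt_eq_mul convex_domK.closure continuous_AK.continuousOn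
    continuous_VK.continuousOn
    (fun t ht => hasDerivAt_AK (sinK_pos_of_mem_interior_closure_domK ht).ne')
    (fun t _ => hasDerivAt_VK t) (fun t ht => AK_pos (by omega) ht)
    (fun c hc d hd hcd => mul_le_mul_of_nonneg_left (antitoneOn_cosK_div_sinK hc hd hcd)
      (Nat.cast_nonneg _))
    fun t ht => IK_VK hn ht

end ModelSpace

/-- The model isoperimetric profile `I_κ` (which satisfies `I_κ(0) = 0`) is concave
on the closure of the range of `V_κ`; in particular `I_κ(δ·v) ≥ δ·I_κ(v)` for every
`v` in the range of `V_κ` and every `δ ∈ [0,1]`. -/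
theorem isoperimetric_profile_concave (n : ℕ) (hn : 2 ≤ n) (κ : ℝ) :
    IK n κ 0 = 0 ∧
    ConcaveOn ℝ (closure (rangeVK n κ)) (IK n κ) ∧
    ∀ v ∈ rangeVK n κ, ∀ δ ∈ Set.Icc (0 : ℝ) 1, δ * IK n κ v ≤ IK n κ (δ * v) := by
  have hIK0 : IK n κ 0 = 0 := by
    simpa only [VK_zero, AK_eq_zero_of_sinK_eq_zero hn sinK_zero] using
      IK_VK (κ := κ) hn (subset_closure zero_mem_domK)
  have hconc : ConcaveOn ℝ (closure (rangeVK n κ)) (IK n κ) := by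
    rw [closure_rangeVK (by omega)]
    exact concaveOn_IK hn
  refine ⟨hIK0, hconc, fun v hv δ hδ => ?_⟩
  have h0 : (0 : ℝ) ∈ closure (rangeVK n κ) := subset_closure ⟨0, zero_mem_domK, VK_zero⟩
  simpa [hIK0] using hconc.2 (subset_closure hv) h0 hδ.1 (sub_nonneg.2 hδ.2) (by ring)
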